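/- Let n₁, n₂, …, n_r be integers with r ≥ 1 and nᵢ ≥ 2 for all i. Define δ_k = n_{k+1}·n_{k+2}···n_r for k = 0, 1, …, r−1 and δ_r = 1. Then the sequence (δ₀, δ₁, …, δ_r) satisfies: (I) setting d_i = gcd(δ₀, …, δ_{i−1}) for 1 ≤ i ≤ r+1 and m_i = d_i/d_{i+1} for 1 ≤ i ≤ r, we have d_{r+1} = 1 and m_i > 1 for all 1 ≤ i ≤ r; (II) for 1 ≤ i ≤ r, m_i·δ_i belongs to the additive semigroup generated by δ₀, δ₁, …, δ_{i−1}; (III) δ₀ > δ₁ and δ_i < δ_{i−1}·m_{i−1} for i = 2, 3, …, r. -/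

import Mathlib

/-! Since `δ k = n (k+1) * δ (k+1)`, the sequence is a divisibility chain, so
`d (i+1) = gcd (δ 0, …, δ i) = δ i`. This gives `m i = n i ≥ 2` and `d (r+1) = δ r = 1`;
(II) holds because `m i * δ i = δ (i-1)` is itself a generator, and (III) because
`δ i < n i * δ i = δ (i-1)`. -/

open Finset

theorem prod_Icc_eq_mul_prod_Icc_succ {M : Type*} [CommMonoid M] (f : ℕ → M) {k r : ℕ}
    (h : k ≤ r) : ∏ j ∈ Icc k r, f j = f k * ∏ j ∈ Icc (k + 1) r, f j := by
  rw [Icc_eq_cons_Ioc h, prod_cons, Icc_add_one_left_eq_Ioc]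

theorem gcd_range_succ_eq_of_dvd_succ (f : ℕ → ℕ) {k : ℕ}
    (hf : ∀ i < k, f (i + 1) ∣ f i) : (range (k + 1)).gcd f = f k := by
  induction k with
  | zero => simp
  | succ k ih =>
    rw [range_add_one, gcd_insert, ih fun i hi => hf i (by omega)]
    exact Nat.gcd_eq_left (hf k (by omega))

section ProductSequence

variable {r : ℕ} {n δ : ℕ → ℕ}

theorem pos_of_eq_prod_Icc (hn : ∀ i, 1 ≤ i → i ≤ r → 2 ≤ n i)
    (hδ : ∀ k, k ≤ r → δ k = ∏ j ∈ Icc (k + 1) r, n j) {k : ℕ} (hk : k ≤ r) :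
    0 < δ k := by
  rw [hδ k hk]
  refine prod_pos fun j hj => ?_
  have := hn j (by simp at hj; omega) (mem_Icc.1 hj).2
  omega

theorem eq_mul_succ_of_eq_prod_Icc (hδ : ∀ k, k ≤ r → δ k = ∏ j ∈ Icc (k + 1) r, n j)
    {k : ℕ} (hk : k < r) : δ k = n (k + 1) * δ (k + 1) := by
  rw [hδ k hk.le, hδ (k + 1) hk, prod_Icc_eq_mul_prod_Icc_succ n hk]

end ProductSequence

/-- The sequence δ_k = n_{k+1}···n_r (with δ_r = 1) built from integers
n_1,…,n_r ≥ 2 satisfies the three conditions (I), (II), (III) of a δ-sequence. -/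
theorem stmt0 (r : ℕ) (hr : 1 ≤ r) (n : ℕ → ℕ)
    (hn : ∀ i, 1 ≤ i → i ≤ r → 2 ≤ n i)
    (δ : ℕ → ℕ) (hδ : ∀ k, k ≤ r → δ k = ∏ j ∈ Finset.Icc (k + 1) r, n j)
    (d : ℕ → ℕ) (hd : ∀ i, d i = Finset.gcd (Finset.range i) δ)
    (m : ℕ → ℕ) (hm : ∀ i, m i = d i / d (i + 1)) :
    (d (r + 1) = 1 ∧ ∀ i, 1 ≤ i → i ≤ r → 1 < m i) ∧
    (∀ i, 1 ≤ i → i ≤ r →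
      (m i * δ i) ∈ AddSubmonoid.closure (δ '' {j | j < i})) ∧
    (δ 1 < δ 0 ∧ ∀ i, 2 ≤ i → i ≤ r → δ i < δ (i - 1) * m (i - 1)) := by
  have hpos {k} (hk : k ≤ r) : 0 < δ k := pos_of_eq_prod_Icc hn hδ hk
  have hstep {k} (hk : k < r) : δ k = n (k + 1) * δ (k + 1) := eq_mul_succ_of_eq_prod_Icc hδ hk
  have hd_succ {k} (hk : k ≤ r) : d (k + 1) = δ k := by
    refine (hd _).trans (gcd_range_succ_eq_of_dvd_succ δ fun i hi => ?_)
    exact Dvd.intro_left _ (hstep (by omega)).symm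
  have hm_succ {k} (hk : k < r) : m (k + 1) = n (k + 1) := by
    rw [hm, hd_succ hk.le, hd_succ hk, hstep hk, Nat.mul_div_cancel _ (hpos hk)]
  have hδr : δ r = 1 := by simp [hδ r le_rfl]
  have hdescent {k} (hk : k < r) : δ (k + 1) < δ k := by
    have : 2 ≤ n (k + 1) := hn (k + 1) (by omega) hk
    have : 0 < δ (k + 1) := hpos hk
    rw [hstep hk]
    nlinarith
  refine ⟨⟨by rw [hd_succ le_rfl, hδr], fun i h1 h2 => ?_⟩, fun i h1 h2 => ?_, hdescent hr,
    fun i h2 h3 => ?_⟩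
  · obtain ⟨k, rfl⟩ : ∃ k, i = k + 1 := ⟨i - 1, by omega⟩
    rw [hm_succ (by omega)]
    exact hn (k + 1) h1 h2
  · obtain ⟨k, rfl⟩ : ∃ k, i = k + 1 := ⟨i - 1, by omega⟩
    rw [hm_succ (by omega), ← hstep (by omega)]
    exact AddSubmonoid.subset_closure ⟨k, by simp, rfl⟩
  · obtain ⟨k, rfl⟩ : ∃ k, i = k + 2 := ⟨i - 2, by omega⟩
    rw [show k + 2 - 1 = k + 1 by omega, hm_succ (by omega)]
    have := hn (k + 1) (by omega) (by omega)
    calc δ (k + 2) < δ (k + 1) := hdescent (by omega)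
      _ ≤ δ (k + 1) * n (k + 1) := Nat.le_mul_of_pos_right _ (by omega)
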